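/- arXiv:1901.00696 — 2 statements merged into one kernel-verified Lean document; each statement's English description precedes it below -/
import Mathlib

section
/- Let P be an n×n real symmetric positive definite matrix, R an m×m real symmetric positive definite matrix, H an m×n real matrix, s₀ ∈ ℝⁿ, ŷ ∈ ℝᵐ, and y ∈ ℝᵐ. Define the Kalman observation step: K := P Hᵀ (H P Hᵀ + R)⁻¹, P₊ := (I − K H) P, s₊ := s₀ + K (y − ŷ). Then P₊ = (P⁻¹ + Hᵀ R⁻¹ H)⁻¹ and s₊ = s₀ + P₊ Hᵀ R⁻¹ (y − ŷ). -/
/-!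
With the innovation covariance `S = H P Hᵀ + R`, the gain satisfies `K S = P Hᵀ`, i.e.
`K H P Hᵀ = P Hᵀ - K R`. Multiplying by `R⁻¹` on the right gives `(1 - K H) P Hᵀ R⁻¹ = K`,
and then `(1 - K H) P (P⁻¹ + Hᵀ R⁻¹ H) = (1 - K H) + K H = 1`.
-/

open Matrix

namespace Matrix

section KalmanAlgebra

variable {α : Type*} [CommRing α] {n m : Type*} [Fintype n] [Fintype m] [DecidableEq m]

noncomputable def kalmanGain (P : Matrix n n α) (H : Matrix m n α) (R : Matrix m m α) :
    Matrix n m α :=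
  P * Hᵀ * (H * P * Hᵀ + R)⁻¹

variable {P : Matrix n n α} {H : Matrix m n α} {R : Matrix m m α}

theorem kalmanGain_mul_innovationCov (hS : IsUnit (H * P * Hᵀ + R).det) :
    kalmanGain P H R * (H * P * Hᵀ + R) = P * Hᵀ := by
  rw [kalmanGain, Matrix.mul_assoc, nonsing_inv_mul _ hS, Matrix.mul_one]

variable [DecidableEq n]

theorem posterior_mul_transpose_mul_inv_eq_kalmanGain (hR : IsUnit R.det)
    (hS : IsUnit (H * P * Hᵀ + R).det) :
    (1 - kalmanGain P H R * H) * P * Hᵀ * R⁻¹ = kalmanGain P H R := by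
  set K := kalmanGain P H R
  have hKHPH : K * (H * P * Hᵀ) = P * Hᵀ - K * R :=
    eq_sub_of_add_eq (by rw [← Matrix.mul_add]; exact kalmanGain_mul_innovationCov hS)
  calc (1 - K * H) * P * Hᵀ * R⁻¹ = P * Hᵀ * R⁻¹ - K * (H * P * Hᵀ) * R⁻¹ := by
        simp only [Matrix.sub_mul, Matrix.one_mul, Matrix.mul_assoc]
    _ = K * (R * R⁻¹) := by
        rw [hKHPH, Matrix.sub_mul, sub_sub_cancel, Matrix.mul_assoc]
    _ = K := by rw [mul_nonsing_inv _ hR, Matrix.mul_one]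

theorem posterior_mul_information (hP : IsUnit P.det) (hR : IsUnit R.det)
    (hS : IsUnit (H * P * Hᵀ + R).det) :
    (1 - kalmanGain P H R * H) * P * (P⁻¹ + Hᵀ * R⁻¹ * H) = 1 := by
  have hgain := posterior_mul_transpose_mul_inv_eq_kalmanGain hR hS
  calc (1 - kalmanGain P H R * H) * P * (P⁻¹ + Hᵀ * R⁻¹ * H)
        = (1 - kalmanGain P H R * H) * (P * P⁻¹)
          + (1 - kalmanGain P H R * H) * P * Hᵀ * R⁻¹ * H := by
        simp only [Matrix.mul_add, Matrix.mul_assoc]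
    _ = 1 := by rw [mul_nonsing_inv _ hP, hgain, Matrix.mul_one, sub_add_cancel]

theorem inv_information_eq_posterior (hP : IsUnit P.det) (hR : IsUnit R.det)
    (hS : IsUnit (H * P * Hᵀ + R).det) :
    (P⁻¹ + Hᵀ * R⁻¹ * H)⁻¹ = (1 - kalmanGain P H R * H) * P :=
  inv_eq_left_inv (posterior_mul_information hP hR hS)

end KalmanAlgebra

theorem PosSemidef.mul_mul_transpose_add {n m : Type*} [Fintype n] [Fintype m]
    {P : Matrix n n ℝ} {R : Matrix m m ℝ} (hP : P.PosSemidef) (hR : R.PosDef)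
    (H : Matrix m n ℝ) : (H * P * Hᵀ + R).PosDef :=
  hR.posSemidef_add (by simpa using hP.mul_mul_conjTranspose_same H)

end Matrix

/-- Reformulation of the Kalman observation step: the posterior covariance update is
additive on inverse covariances, and the state update is a gradient step on the
observation log-likelihood preconditioned by the posterior covariance. -/
theorem kalman_observation_step_reformulation
    (n m : ℕ) (P : Matrix (Fin n) (Fin n) ℝ) (hP : P.PosDef)
    (R : Matrix (Fin m) (Fin m) ℝ) (hR : R.PosDef)
    (H : Matrix (Fin m) (Fin n) ℝ)
    (s₀ : Fin n → ℝ) (yhat y : Fin m → ℝ)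
    (K : Matrix (Fin n) (Fin m) ℝ) (hK : K = P * Hᵀ * (H * P * Hᵀ + R)⁻¹)
    (Pplus : Matrix (Fin n) (Fin n) ℝ) (hPplus : Pplus = (1 - K * H) * P)
    (splus : Fin n → ℝ) (hsplus : splus = s₀ + K.mulVec (y - yhat)) :
    Pplus = (P⁻¹ + Hᵀ * R⁻¹ * H)⁻¹ ∧
      splus = s₀ + (Pplus * Hᵀ * R⁻¹).mulVec (y - yhat) := by
  have hPu : IsUnit P.det := (isUnit_iff_isUnit_det _).mp hP.isUnit
  have hRu : IsUnit R.det := (isUnit_iff_isUnit_det _).mp hR.isUnit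
  have hSu : IsUnit (H * P * Hᵀ + R).det :=
    (isUnit_iff_isUnit_det _).mp (PosSemidef.mul_mul_transpose_add hP.posSemidef hR H).isUnit
  have hK' : K = kalmanGain P H R := hK
  subst hK' hPplus hsplus
  exact ⟨(inv_information_eq_posterior hPu hRu hSu).symm,
    by rw [posterior_mul_transpose_mul_inv_eq_kalmanGain hRu hSu]⟩
end

section
/- Let P be an n×n real symmetric positive definite matrix, F an invertible n×n real matrix, R an m×m real symmetric positive definite matrix, H an m×n real matrix, α ≥ 0 a real number, and η_prev, η positive reals with 1/η = 1/((1+α) η_prev) + 1. Define P_pred := (1+α) F P Fᵀ, P₊ := (P_pred⁻¹ + Hᵀ R⁻¹ H)⁻¹, J := η_prev P⁻¹, and J₊ := (1−η) (F⁻¹)ᵀ J F⁻¹ + η Hᵀ R⁻¹ H. Then all the inverses involved exist (in particular P_pred and P_pred⁻¹ + Hᵀ R⁻¹ H are symmetric positive definite) and J₊ = η P₊⁻¹; equivalently P₊ = η J₊⁻¹. -/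
open Matrix

/-!
In information form `P₊⁻¹ = P_pred⁻¹ + Hᵀ R⁻¹ H` with `P_pred⁻¹ = (1 + α)⁻¹ (F⁻¹)ᵀ P⁻¹ F⁻¹`,
while `J₊ = (1 - η) η_prev (F⁻¹)ᵀ P⁻¹ F⁻¹ + η Hᵀ R⁻¹ H`. So `J₊ = η P₊⁻¹` reduces to the
scalar identity `(1 - η) η_prev = η / (1 + α)`, which is the learning-rate relation solved
for `η`.
-/

lemma one_sub_mul_eq_of_one_div_eq_one_div_add_one {K : Type*} [Field K] {c η : K}
    (hc : c ≠ 0) (hη : η ≠ 0) (h : 1 / η = 1 / c + 1) : (1 - η) * c = η := by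
  field_simp at h
  linear_combination h

namespace Matrix

variable {ι κ : Type*} [Fintype ι] [Fintype κ]

lemma PosDef.posSemidef_transpose_mul_inv_mul [DecidableEq κ] {R : Matrix κ κ ℝ}
    (hR : R.PosDef) (H : Matrix κ ι ℝ) : (Hᵀ * R⁻¹ * H).PosSemidef := by
  simpa only [conjTranspose_eq_transpose_of_trivial] using
    hR.inv.posSemidef.conjTranspose_mul_mul_same H

variable [DecidableEq ι]

lemma inv_smul_of_ne_zero {K : Type*} [Field K] {A : Matrix ι ι K} {c : K} (hc : c ≠ 0)
    (hA : IsUnit A) : (c • A)⁻¹ = c⁻¹ • A⁻¹ :=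
  inv_smul' A (Units.mk0 c hc) ((isUnit_iff_isUnit_det A).mp hA)

lemma inv_smul_mul_mul_transpose {K : Type*} [Field K] {F P : Matrix ι ι K} {c : K}
    (hc : c ≠ 0) (hF : IsUnit F) (hP : IsUnit P) :
    (c • (F * P * Fᵀ))⁻¹ = c⁻¹ • ((F⁻¹)ᵀ * P⁻¹ * F⁻¹) := by
  rw [inv_smul_of_ne_zero hc ((hF.mul hP).mul ((isUnit_transpose F).mpr hF)), mul_inv_rev,
    mul_inv_rev, transpose_nonsing_inv, mul_assoc]

lemma eq_smul_inv_of_eq_smul_inv {K : Type*} [Field K] {A B : Matrix ι ι K} {c : K}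
    (hc : c ≠ 0) (hB : IsUnit B) (h : A = c • B⁻¹) : B = c • A⁻¹ := by
  rw [h, inv_smul_of_ne_zero hc (isUnit_nonsing_inv_iff.mpr hB),
    nonsing_inv_nonsing_inv B ((isUnit_iff_isUnit_det B).mp hB), smul_smul,
    mul_inv_cancel₀ hc, one_smul]

lemma PosDef.mul_mul_transpose {P F : Matrix ι ι ℝ} (hP : P.PosDef) (hF : IsUnit F) :
    (F * P * Fᵀ).PosDef := by
  simpa only [conjTranspose_eq_transpose_of_trivial] using
    hP.mul_mul_conjTranspose_same (vecMul_injective_of_isUnit hF)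

end Matrix

/-- The key covariance computation: the proportionality `P = η J⁻¹` between the Kalman
covariance and the inverse Fisher matrix propagates through one step of the pure
fading-memory extended Kalman filter / online natural gradient. -/
theorem covariance_fisher_proportionality_step
    (n m : ℕ) (P : Matrix (Fin n) (Fin n) ℝ) (hP : P.PosDef)
    (F : Matrix (Fin n) (Fin n) ℝ) (hF : IsUnit F)
    (R : Matrix (Fin m) (Fin m) ℝ) (hR : R.PosDef)
    (H : Matrix (Fin m) (Fin n) ℝ)
    (α : ℝ) (hα : 0 ≤ α)
    (ηprev η : ℝ) (hηprev : 0 < ηprev) (hη : 0 < η)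
    (hηrec : 1 / η = 1 / ((1 + α) * ηprev) + 1)
    (Ppred : Matrix (Fin n) (Fin n) ℝ) (hPpred : Ppred = (1 + α) • (F * P * Fᵀ))
    (Pplus : Matrix (Fin n) (Fin n) ℝ) (hPplus : Pplus = (Ppred⁻¹ + Hᵀ * R⁻¹ * H)⁻¹)
    (J : Matrix (Fin n) (Fin n) ℝ) (hJ : J = ηprev • P⁻¹)
    (Jplus : Matrix (Fin n) (Fin n) ℝ)
    (hJplus : Jplus = (1 - η) • ((F⁻¹)ᵀ * J * F⁻¹) + η • (Hᵀ * R⁻¹ * H)) :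
    Ppred.PosDef ∧ (Ppred⁻¹ + Hᵀ * R⁻¹ * H).PosDef ∧
      IsUnit Ppred ∧ IsUnit (Ppred⁻¹ + Hᵀ * R⁻¹ * H) ∧
      Jplus = η • Pplus⁻¹ ∧ Pplus = η • Jplus⁻¹ := by
  have h1α : 0 < 1 + α := by linarith
  have hPpredPD : Ppred.PosDef := hPpred ▸ (hP.mul_mul_transpose hF).smul h1α
  have hSumPD : (Ppred⁻¹ + Hᵀ * R⁻¹ * H).PosDef :=
    hPpredPD.inv.add_posSemidef (hR.posSemidef_transpose_mul_inv_mul H)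
  have hPplusInv : Pplus⁻¹ = Ppred⁻¹ + Hᵀ * R⁻¹ * H := by
    rw [hPplus, nonsing_inv_nonsing_inv _ ((isUnit_iff_isUnit_det _).mp hSumPD.isUnit)]
  have hrate : (1 - η) * ηprev = η * (1 + α)⁻¹ := by
    have hsolved := one_sub_mul_eq_of_one_div_eq_one_div_add_one
      (mul_pos h1α hηprev).ne' hη.ne' hηrec
    field_simp
    linear_combination hsolved
  have hJplusEq : Jplus = η • Pplus⁻¹ := by
    rw [hJplus, hJ, hPplusInv, hPpred, inv_smul_mul_mul_transpose h1α.ne' hF hP.isUnit,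
      Matrix.mul_smul, Matrix.smul_mul, smul_smul, hrate, smul_add, smul_smul]
  exact ⟨hPpredPD, hSumPD, hPpredPD.isUnit, hSumPD.isUnit, hJplusEq,
    eq_smul_inv_of_eq_smul_inv hη.ne' (hPplus ▸ hSumPD.inv.isUnit) hJplusEq⟩
end
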